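/- arXiv:2410.10001 — 4 statements merged into one kernel-verified Lean document; each statement's English description precedes it below -/
import Mathlib

section
/- Suppose that L has lower Matuszewska index at zero strictly bigger than −p, i.e., there exist a > −p and constants A, R₀ > 0 such that L(r₂) ≥ A (r₂/r₁)^a L(r₁) whenever 0 < r₁ < r₂ < R₀. Then there exist r₀ > 0 and constants c₁, c₂ > 0 such that c₁ L(r) ≤ h_p(r) ≤ c₂ L(r) for all 0 < r < r₀. -/
/-!
The lower bound holds with `c₁ = 1` since the integrand of `h_p(r)` equals `1` on `{|x| > r}`.
For the upper bound, split `{0 < |x|}` into dyadic shells `r 2^(-k-1) < |x| ≤ r 2^(-k)`: this gives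
`min(1, |x|^p/r^p) ≤ ∑ₖ 2^(-kp) 1{|x| > r 2^(-k-1)}`, hence `h_p(r) ≤ ∑ₖ 2^(-kp) L(r 2^(-k-1))`.
The Matuszewska condition bounds `L(r 2^(-k-1))` by `A⁻¹ 2^(-(k+1)a) L(r)`, so the series is
geometric with ratio `2^(-(p+a)) < 1`.
-/

open MeasureTheory ENNReal Set Filter Topology

/-- The concentration function `h_p(r) = ∫ min(1, |x|^p/r^p) ν(dx)`. -/
noncomputable def hpFun (d : ℕ) (p : ℝ) (ν : Measure (EuclideanSpace ℝ (Fin d))) (r : ℝ) :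
    ℝ≥0∞ :=
  ∫⁻ x, ENNReal.ofReal (min 1 (‖x‖ ^ p / r ^ p)) ∂ν

/-- The tail function `L(r) = ν({x : |x| > r})`. -/
noncomputable def LFun (d : ℕ) (ν : Measure (EuclideanSpace ℝ (Fin d))) (r : ℝ) : ℝ≥0∞ :=
  ν {x | r < ‖x‖}

def LowerMatuszewskaBound (L : ℝ → ℝ≥0∞) (a A R₀ : ℝ) : Prop :=
  ∀ r₁ r₂ : ℝ, 0 < r₁ → r₁ < r₂ → r₂ < R₀ → ENNReal.ofReal (A * (r₂ / r₁) ^ a) * L r₁ ≤ L r₂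

namespace LowerMatuszewskaBound

variable {L : ℝ → ℝ≥0∞} {a A R₀ : ℝ}

lemma apply_div_two_pow_succ_le (hMat : LowerMatuszewskaBound L a A R₀) (hA : 0 < A)
    {r : ℝ} (hr : 0 < r) (hrR : r < R₀) (k : ℕ) :
    L (r / 2 ^ (k + 1)) ≤
      ENNReal.ofReal (A⁻¹ * 2 ^ (-a)) * ENNReal.ofReal (2 ^ (-a)) ^ k * L r := by
  have hM := hMat (r / 2 ^ (k + 1)) r (by positivity)
    (div_lt_self hr (one_lt_pow₀ (by norm_num : (1 : ℝ) < 2) k.succ_ne_zero)) hrR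
  rw [div_div_cancel₀ hr.ne', ← Real.rpow_pow_comm zero_le_two] at hM
  have hc : 0 < A * ((2 : ℝ) ^ a) ^ (k + 1) := by positivity
  have hconst : (A * ((2 : ℝ) ^ a) ^ (k + 1))⁻¹ = A⁻¹ * 2 ^ (-a) * (2 ^ (-a)) ^ k := by
    rw [Real.rpow_neg zero_le_two, mul_inv, ← inv_pow, pow_succ]
    ring
  rw [← ENNReal.ofReal_pow (by positivity), ← ENNReal.ofReal_mul (by positivity), ← hconst,
    ENNReal.ofReal_inv_of_pos hc, ← ENNReal.div_eq_inv_mul,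
    ENNReal.le_div_iff_mul_le (.inl (ENNReal.ofReal_pos.2 hc).ne') (.inl ofReal_ne_top), mul_comm]
  exact hM

lemma tsum_geometric_mul_le (hMat : LowerMatuszewskaBound L a A R₀) (hA : 0 < A) {p : ℝ}
    (hpa : 0 < p + a) {r : ℝ} (hr : 0 < r) (hrR : r < R₀) :
    ∑' k : ℕ, ENNReal.ofReal (2 ^ (-p)) ^ k * L (r / 2 ^ (k + 1)) ≤
      ENNReal.ofReal (A⁻¹ * 2 ^ (-a) / (1 - 2 ^ (-(p + a)))) * L r := by
  have hq : (2 : ℝ) ^ (-(p + a)) < 1 := Real.rpow_lt_one_of_one_lt_of_neg one_lt_two (by linarith)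
  have hratio : ENNReal.ofReal (2 ^ (-p)) * ENNReal.ofReal (2 ^ (-a)) =
      ENNReal.ofReal (2 ^ (-(p + a))) := by
    rw [← ENNReal.ofReal_mul (by positivity), ← Real.rpow_add two_pos, neg_add]
  calc ∑' k : ℕ, ENNReal.ofReal (2 ^ (-p)) ^ k * L (r / 2 ^ (k + 1))
      ≤ ∑' k : ℕ, ENNReal.ofReal (2 ^ (-p)) ^ k *
          (ENNReal.ofReal (A⁻¹ * 2 ^ (-a)) * ENNReal.ofReal (2 ^ (-a)) ^ k * L r) :=
        ENNReal.tsum_le_tsum fun k ↦ mul_le_mul_right (hMat.apply_div_two_pow_succ_le hA hr hrR k) _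
    _ = ENNReal.ofReal (A⁻¹ * 2 ^ (-a)) * (∑' k : ℕ, ENNReal.ofReal (2 ^ (-(p + a))) ^ k) *
          L r := by
        rw [← ENNReal.tsum_mul_left, ← ENNReal.tsum_mul_right, ← hratio]
        congr 1 with k
        ring
    _ = ENNReal.ofReal (A⁻¹ * 2 ^ (-a) / (1 - 2 ^ (-(p + a)))) * L r := by
        rw [ENNReal.tsum_geometric, ENNReal.ofReal_div_of_pos (by linarith),
          ENNReal.ofReal_sub _ (by positivity), ENNReal.ofReal_one, div_eq_mul_inv]

end LowerMatuszewskaBound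

lemma ofReal_min_one_rpow_div_le_tsum_indicator {E : Type*} [SeminormedAddCommGroup E]
    {p r : ℝ} (hp : 0 < p) (hr : 0 < r) (x : E) :
    ENNReal.ofReal (min 1 (‖x‖ ^ p / r ^ p)) ≤
      ∑' k : ℕ, {y : E | r / 2 ^ (k + 1) < ‖y‖}.indicator
        (fun _ ↦ ENNReal.ofReal (2 ^ (-p)) ^ k) x := by
  rcases (norm_nonneg x).eq_or_lt with hx | hx
  · simp [← hx, Real.zero_rpow hp.ne']
  rcases lt_or_ge r ‖x‖ with hrx | hxr
  · have hmem : x ∈ {y : E | r / 2 ^ (0 + 1) < ‖y‖} := by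
      show r / 2 ^ (0 + 1) < ‖x‖
      linarith [half_lt_self hr]
    refine le_trans ?_ (ENNReal.le_tsum 0)
    rw [Set.indicator_of_mem hmem, pow_zero]
    exact ENNReal.ofReal_le_one.2 (min_le_left _ _)
  obtain ⟨k, hk, hk'⟩ := exists_nat_pow_near ((one_le_div hx).2 hxr) one_lt_two
  have hmem : x ∈ {y : E | r / 2 ^ (k + 1) < ‖y‖} := by
    show r / 2 ^ (k + 1) < ‖x‖
    rw [div_lt_iff₀ (by positivity), mul_comm]
    exact (div_lt_iff₀ hx).1 hk'
  refine le_trans ?_ (ENNReal.le_tsum k)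
  rw [Set.indicator_of_mem hmem, ← ENNReal.ofReal_pow (by positivity)]
  refine ENNReal.ofReal_le_ofReal ((min_le_right _ _).trans ?_)
  rw [← Real.div_rpow hx.le hr.le, Real.rpow_pow_comm zero_le_two, Real.rpow_neg (by positivity),
    ← Real.inv_rpow (by positivity)]
  gcongr
  rw [div_le_iff₀ hr, inv_mul_eq_div, le_div_iff₀' (by positivity)]
  exact (le_div_iff₀ hx).1 hk

section Concentration

variable {d : ℕ} {p r : ℝ} (ν : Measure (EuclideanSpace ℝ (Fin d)))

lemma LFun_le_hpFun (hp : 0 < p) (hr : 0 < r) : LFun d ν r ≤ hpFun d p ν r := by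
  rw [LFun, ← lintegral_indicator_one (measurableSet_lt measurable_const measurable_norm), hpFun]
  refine lintegral_mono (Set.indicator_le fun x hx ↦ ?_)
  have : 1 ≤ ‖x‖ ^ p / r ^ p := by
    rw [one_le_div (by positivity)]
    exact Real.rpow_le_rpow hr.le (le_of_lt hx) hp.le
  simp [min_eq_left this]

lemma hpFun_le_tsum_LFun (hp : 0 < p) (hr : 0 < r) :
    hpFun d p ν r ≤ ∑' k : ℕ, ENNReal.ofReal (2 ^ (-p)) ^ k * LFun d ν (r / 2 ^ (k + 1)) := by
  have hmeas (k : ℕ) : MeasurableSet {x : EuclideanSpace ℝ (Fin d) | r / 2 ^ (k + 1) < ‖x‖} :=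
    measurableSet_lt measurable_const measurable_norm
  calc hpFun d p ν r
      ≤ ∫⁻ x, ∑' k : ℕ, {y | r / 2 ^ (k + 1) < ‖y‖}.indicator
          (fun _ ↦ ENNReal.ofReal (2 ^ (-p)) ^ k) x ∂ν :=
        lintegral_mono (ofReal_min_one_rpow_div_le_tsum_indicator hp hr)
    _ = ∑' k : ℕ, ENNReal.ofReal (2 ^ (-p)) ^ k * LFun d ν (r / 2 ^ (k + 1)) := by
        rw [lintegral_tsum fun k ↦ (measurable_const.indicator (hmeas k)).aemeasurable]
        simp_rw [lintegral_indicator_const (hmeas _)]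
        rfl

end Concentration

theorem statement_0_general (d : ℕ) (p : ℝ) (hp1 : 1 ≤ p)
    (ν : Measure (EuclideanSpace ℝ (Fin d)))
    (a A R₀ : ℝ) (ha : -p < a) (hA : 0 < A) (hR₀ : 0 < R₀)
    (hMat : ∀ r₁ r₂ : ℝ, 0 < r₁ → r₁ < r₂ → r₂ < R₀ →
      ENNReal.ofReal (A * (r₂ / r₁) ^ a) * LFun d ν r₁ ≤ LFun d ν r₂) :
    ∃ r₀ > (0 : ℝ), ∃ c₁ > (0 : ℝ), ∃ c₂ > (0 : ℝ), ∀ r : ℝ, 0 < r → r < r₀ →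
      ENNReal.ofReal c₁ * LFun d ν r ≤ hpFun d p ν r ∧
      hpFun d p ν r ≤ ENNReal.ofReal c₂ * LFun d ν r := by
  have hp : 0 < p := zero_lt_one.trans_le hp1
  have hpa : 0 < p + a := by linarith
  have hc₂ : 0 < A⁻¹ * 2 ^ (-a) / (1 - 2 ^ (-(p + a))) := by
    have := Real.rpow_lt_one_of_one_lt_of_neg one_lt_two (neg_neg_of_pos hpa)
    have : 0 < 1 - (2 : ℝ) ^ (-(p + a)) := by linarith
    positivity
  refine ⟨R₀, hR₀, 1, one_pos, _, hc₂, fun r hr hrR ↦ ⟨?_, ?_⟩⟩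
  · simpa using LFun_le_hpFun ν hp hr
  · exact (hpFun_le_tsum_LFun ν hp hr).trans
      (LowerMatuszewskaBound.tsum_geometric_mul_le hMat hA hpa hr hrR)

/-- If `L` has lower Matuszewska index at zero strictly bigger than `-p`
(i.e. `L(r₂) ≥ A (r₂/r₁)^a L(r₁)` for `0 < r₁ < r₂ < R₀` with some `a > -p`, `A, R₀ > 0`),
then there exist `r₀ > 0` and `c₁, c₂ > 0` with `c₁ L(r) ≤ h_p(r) ≤ c₂ L(r)` for `0 < r < r₀`. -/
theorem statement_0 (d : ℕ) (hd : 1 ≤ d) (p : ℝ) (hp1 : 1 ≤ p)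
    (ν : Measure (EuclideanSpace ℝ (Fin d)))
    (hint : ∫⁻ x, ENNReal.ofReal (min 1 (‖x‖ ^ p)) ∂ν < ⊤)
    (a A R₀ : ℝ) (ha : -p < a) (hA : 0 < A) (hR₀ : 0 < R₀)
    (hMat : ∀ r₁ r₂ : ℝ, 0 < r₁ → r₁ < r₂ → r₂ < R₀ →
      ENNReal.ofReal (A * (r₂ / r₁) ^ a) * LFun d ν r₁ ≤ LFun d ν r₂) :
    ∃ r₀ > (0 : ℝ), ∃ c₁ > (0 : ℝ), ∃ c₂ > (0 : ℝ), ∀ r : ℝ, 0 < r → r < r₀ →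
      ENNReal.ofReal c₁ * LFun d ν r ≤ hpFun d p ν r ∧
      hpFun d p ν r ≤ ENNReal.ofReal c₂ * LFun d ν r :=
  statement_0_general d p hp1 ν a A R₀ ha hA hR₀ hMat
end

section
/- Lower semi-continuity of the nonlocal capacity: if (E_j)_{j∈ℕ} is an increasing sequence of subsets of ℝ^d, then Cap_{ν,p}(⋃_{j=1}^∞ E_j) = lim_{j→∞} Cap_{ν,p}(E_j). -/
open MeasureTheory ENNReal Set Filter Topology

/-- The nonlocal Sobolev seminorm `[f]_{W_p^ν}` (as an extended nonnegative real):
`[f]_{W_p^ν} = (∫∫ |f(x+h)-f(x)|^p dx ν(dh))^(1/p)`. -/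
noncomputable def nlSeminorm (d : ℕ) (p : ℝ) (ν : Measure (EuclideanSpace ℝ (Fin d)))
    (f : EuclideanSpace ℝ (Fin d) → ℝ) : ℝ≥0∞ :=
  (∫⁻ h, (∫⁻ x, ENNReal.ofReal (|f (x + h) - f x| ^ p)) ∂ν) ^ (1 / p)

/-- The nonlocal Sobolev norm `‖f‖_{W_p^ν} = ‖f‖_{L^p} + [f]_{W_p^ν}`. -/
noncomputable def nlNorm (d : ℕ) (p : ℝ) (ν : Measure (EuclideanSpace ℝ (Fin d)))
    (f : EuclideanSpace ℝ (Fin d) → ℝ) : ℝ≥0∞ :=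
  (∫⁻ x, ENNReal.ofReal (|f x| ^ p)) ^ (1 / p) + nlSeminorm d p ν f

/-- Membership in the nonlocal Sobolev space `W_p^ν`. -/
def memW (d : ℕ) (p : ℝ) (ν : Measure (EuclideanSpace ℝ (Fin d)))
    (f : EuclideanSpace ℝ (Fin d) → ℝ) : Prop :=
  Measurable f ∧ nlNorm d p ν f < ⊤

/-- The `W_p^ν`-capacity of a set `E ⊆ ℝ^d`:
`Cap_{ν,p}(E) = inf { ‖f‖_{W_p^ν}^p : f ∈ W_p^ν, E ⊆ int {f ≥ 1} }`. -/
noncomputable def capNu (d : ℕ) (p : ℝ) (ν : Measure (EuclideanSpace ℝ (Fin d)))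
    (E : Set (EuclideanSpace ℝ (Fin d))) : ℝ≥0∞ :=
  ⨅ (f : EuclideanSpace ℝ (Fin d) → ℝ)
    (_ : memW d p ν f ∧ E ⊆ interior {x | 1 ≤ f x}), nlNorm d p ν f ^ p

/-!
The `p`-th power of the norm is not submodular under `max` and `min`, but it is the infimum over
`t ∈ (0, 1)` of the energies `t ^ (1 - p) ‖f‖_p ^ p + (1 - t) ^ (1 - p) [f] ^ p`, and each of these
is: since `|·| ^ p` is convex, the lattice operations do not increase the sum of the two pointwise
integrands. For a submodular energy that is lower semicontinuous under pointwise convergence the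
classical Choquet argument applies. Take near-optimal test functions `g j` for `E j`, truncated at
`1`; the running maxima `g 0 ⊔ ⋯ ⊔ g n` cost at most `cap (E n) + ε`, because
`(g 0 ⊔ ⋯ ⊔ g n) ⊓ g (n + 1)` is admissible for `E n` and absorbs the excess of the submodular bound; their pointwise limit is
admissible for `⋃ j, E j`, and Fatou bounds its energy. To return to the norm, take near-optimal
functions for the `E j`, extract a subsequence along which both parts of their energy converge, and
choose `t` only at the limit.
-/

theorem ENNReal.liminf_add_liminf_le {ι : Type*} {l : Filter ι} (u v : ι → ℝ≥0∞) :
    liminf u l + liminf v l ≤ liminf (fun i => u i + v i) l := by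
  simp only [liminf_eq_iSup_iInf]
  refine biSup_add_biSup_le' ⟨univ, univ_mem⟩ ⟨univ, univ_mem⟩ fun s hs t ht => ?_
  refine le_iSup₂_of_le (s ∩ t) (inter_mem hs ht) (le_iInf₂ fun i hi => ?_)
  exact add_le_add (iInf₂_le i hi.1) (iInf₂_le i hi.2)

theorem lintegral_le_liminf_lintegral {α : Type*} [MeasurableSpace α] {μ : Measure α}
    {F : ℕ → α → ℝ≥0∞} {f : α → ℝ≥0∞} (hF : ∀ n, Measurable (F n))
    (hf : ∀ x, f x ≤ liminf (fun n => F n x) atTop) :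
    ∫⁻ x, f x ∂μ ≤ liminf (fun n => ∫⁻ x, F n x ∂μ) atTop :=
  (lintegral_mono hf).trans (lintegral_liminf_le hF)

section Capacity

variable {X : Type*}

section Measurable

variable [MeasurableSpace X]

structure IsCapacitaryEnergy (G : (X → ℝ) → ℝ≥0∞) : Prop where
  submodular : ∀ f g, Measurable f → Measurable g → G (f ⊔ g) + G (f ⊓ g) ≤ G f + G g
  truncate_le : ∀ f, Measurable f → G (f ⊓ 1) ≤ G f
  le_liminf : ∀ (F : ℕ → X → ℝ) (f : X → ℝ), (∀ n, Measurable (F n)) →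
    (∀ x, Tendsto (fun n => F n x) atTop (𝓝 (f x))) → G f ≤ liminf (fun n => G (F n)) atTop

namespace IsCapacitaryEnergy

variable {G G₁ G₂ : (X → ℝ) → ℝ≥0∞}

theorem add (h₁ : IsCapacitaryEnergy G₁) (h₂ : IsCapacitaryEnergy G₂) :
    IsCapacitaryEnergy fun f => G₁ f + G₂ f where
  submodular f g hf hg := by
    rw [add_add_add_comm, add_add_add_comm (G₁ f)]
    exact add_le_add (h₁.submodular f g hf hg) (h₂.submodular f g hf hg)
  truncate_le f hf := add_le_add (h₁.truncate_le f hf) (h₂.truncate_le f hf)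
  le_liminf F f hF hlim := (add_le_add (h₁.le_liminf F f hF hlim) (h₂.le_liminf F f hF hlim)).trans
    (ENNReal.liminf_add_liminf_le _ _)

theorem const_mul (h : IsCapacitaryEnergy G) {c : ℝ≥0∞} (hc : c ≠ ⊤) :
    IsCapacitaryEnergy fun f => c * G f where
  submodular f g hf hg := by
    rw [← mul_add, ← mul_add]
    exact mul_le_mul_right (h.submodular f g hf hg) c
  truncate_le f hf := mul_le_mul_right (h.truncate_le f hf) c
  le_liminf F f hF hlim := by
    rw [ENNReal.liminf_const_mul_of_ne_top hc]
    exact mul_le_mul_right (h.le_liminf F f hF hlim) c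

end IsCapacitaryEnergy

theorem measurable_partialSups {g : ℕ → X → ℝ} (hg : ∀ n, Measurable (g n)) (n : ℕ) :
    Measurable (partialSups g n) := by
  induction n with
  | zero => simpa using hg 0
  | succ n ih => simpa [partialSups_add_one] using ih.sup (hg (n + 1))

end Measurable

theorem subset_interior_partialSups [TopologicalSpace X] {E : ℕ → Set X} {g : ℕ → X → ℝ}
    (hg : ∀ j, E j ⊆ interior {x | 1 ≤ g j x}) (n : ℕ) :
    E n ⊆ interior {x | 1 ≤ partialSups g n x} :=
  (hg n).trans (interior_mono fun x hx => hx.trans (le_partialSups g n x))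

variable [TopologicalSpace X] [MeasurableSpace X]

noncomputable def setCap (G : (X → ℝ) → ℝ≥0∞) (E : Set X) : ℝ≥0∞ :=
  ⨅ (f : X → ℝ) (_ : Measurable f ∧ E ⊆ interior {x | 1 ≤ f x}), G f

variable {G : (X → ℝ) → ℝ≥0∞}

theorem setCap_le {E : Set X} {f : X → ℝ} (hf : Measurable f)
    (hE : E ⊆ interior {x | 1 ≤ f x}) : setCap G E ≤ G f :=
  iInf₂_le f ⟨hf, hE⟩

theorem setCap_mono {E F : Set X} (hEF : E ⊆ F) : setCap G E ≤ setCap G F :=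
  le_iInf₂ fun _ hf => setCap_le hf.1 (hEF.trans hf.2)

theorem exists_lt_of_setCap_lt {E : Set X} {r : ℝ≥0∞} (h : setCap G E < r) :
    ∃ f, Measurable f ∧ E ⊆ interior {x | 1 ≤ f x} ∧ G f < r := by
  simp only [setCap, iInf_lt_iff] at h
  obtain ⟨f, ⟨hf, hE⟩, hlt⟩ := h
  exact ⟨f, hf, hE, hlt⟩

theorem IsCapacitaryEnergy.exists_le_one_le_setCap_add (hG : IsCapacitaryEnergy G) {E : Set X}
    (hE : setCap G E ≠ ⊤) {ε : ℝ≥0∞} (hε : ε ≠ 0) :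
    ∃ f, Measurable f ∧ f ≤ 1 ∧ E ⊆ interior {x | 1 ≤ f x} ∧ G f ≤ setCap G E + ε := by
  obtain ⟨f, hf, hfE, hlt⟩ := exists_lt_of_setCap_lt (ENNReal.lt_add_right hE hε)
  refine ⟨f ⊓ 1, hf.inf measurable_const, inf_le_right, ?_, (hG.truncate_le f hf).trans hlt.le⟩
  simpa [Pi.inf_apply] using hfE

theorem IsCapacitaryEnergy.energy_partialSups_le (hG : IsCapacitaryEnergy G) {E : ℕ → Set X}
    (hE : Monotone E) (hcap : ∀ j, setCap G (E j) ≠ ⊤) {g : ℕ → X → ℝ} {ε : ℕ → ℝ≥0∞}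
    (hgm : ∀ j, Measurable (g j)) (hgE : ∀ j, E j ⊆ interior {x | 1 ≤ g j x})
    (hgG : ∀ j, G (g j) ≤ setCap G (E j) + ε j) (n : ℕ) :
    G (partialSups g n) ≤ setCap G (E n) + ∑ j ∈ Finset.range (n + 1), ε j := by
  induction n with
  | zero => simpa using hgG 0
  | succ n ih =>
    set P := partialSups g n
    have hmin : setCap G (E n) ≤ G (P ⊓ g (n + 1)) := by
      refine setCap_le ((measurable_partialSups hgm n).inf (hgm (n + 1))) ?_
      have : {x | 1 ≤ (P ⊓ g (n + 1)) x} = {x | 1 ≤ P x} ∩ {x | 1 ≤ g (n + 1) x} := by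
        ext x; simp [Pi.inf_apply]
      rw [this, interior_inter]
      exact subset_inter (subset_interior_partialSups hgE n)
        ((hE n.le_succ).trans (hgE (n + 1)))
    refine ENNReal.le_of_add_le_add_left (hcap n) ?_
    calc setCap G (E n) + G (partialSups g (n + 1))
        ≤ G (P ⊔ g (n + 1)) + G (P ⊓ g (n + 1)) := by
          rw [add_comm, partialSups_add_one]; exact add_le_add le_rfl hmin
      _ ≤ G P + G (g (n + 1)) :=
          hG.submodular _ _ (measurable_partialSups hgm n) (hgm (n + 1))
      _ ≤ (setCap G (E n) + ∑ j ∈ Finset.range (n + 1), ε j) +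
            (setCap G (E (n + 1)) + ε (n + 1)) := add_le_add ih (hgG (n + 1))
      _ = setCap G (E n) + (setCap G (E (n + 1)) + ∑ j ∈ Finset.range (n + 2), ε j) := by
          rw [Finset.sum_range_succ _ (n + 1)]; ring

theorem IsCapacitaryEnergy.setCap_iUnion_le (hG : IsCapacitaryEnergy G) {E : ℕ → Set X}
    (hE : Monotone E) : setCap G (⋃ j, E j) ≤ ⨆ j, setCap G (E j) := by
  refine ENNReal.le_of_forall_pos_le_add fun ε hε hS => ?_
  have hcap j : setCap G (E j) ≠ ⊤ := ((le_iSup _ j).trans_lt hS).ne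
  obtain ⟨ε', hε'0, hε'⟩ := ENNReal.exists_pos_sum_of_countable (coe_ne_zero.2 hε.ne') ℕ
  choose g hgm hg1 hgE hgG using fun j =>
    hG.exists_le_one_le_setCap_add (hcap j) (coe_ne_zero.2 (hε'0 j).ne')
  set h : X → ℝ := fun x => ⨆ n, partialSups g n x
  have hbdd x : BddAbove (range fun n => partialSups g n x) :=
    ⟨1, forall_mem_range.2 fun n => partialSups_le g n 1 (fun j _ => hg1 j) x⟩
  have hGh : G h ≤ liminf (fun n => G (partialSups g n)) atTop :=
    hG.le_liminf _ h (measurable_partialSups hgm) fun x =>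
      tendsto_atTop_ciSup (fun m n hmn => partialSups_monotone g hmn x) (hbdd x)
  have hbound n : G (partialSups g n) ≤ (⨆ j, setCap G (E j)) + ε :=
    (hG.energy_partialSups_le hE hcap hgm hgE hgG n).trans <|
      add_le_add (le_iSup (fun j => setCap G (E j)) n) ((ENNReal.sum_le_tsum _).trans hε'.le)
  refine (setCap_le (Measurable.iSup (measurable_partialSups hgm)) ?_).trans
    (hGh.trans (liminf_le_of_frequently_le' (Frequently.of_forall hbound)))
  exact iUnion_subset fun j => (subset_interior_partialSups hgE j).trans
    (interior_mono fun x hx => hx.trans (le_ciSup (hbdd x) j))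

theorem IsCapacitaryEnergy.setCap_iUnion (hG : IsCapacitaryEnergy G) {E : ℕ → Set X}
    (hE : Monotone E) : setCap G (⋃ j, E j) = ⨆ j, setCap G (E j) :=
  le_antisymm (hG.setCap_iUnion_le hE) (iSup_le fun j => setCap_mono (subset_iUnion E j))

end Capacity

theorem convexOn_abs_rpow {p : ℝ} (hp : 1 ≤ p) : ConvexOn ℝ univ fun x : ℝ => |x| ^ p := by
  refine ⟨convex_univ, fun x _ y _ a b ha hb hab => ?_⟩
  simp only [smul_eq_mul]
  calc |a * x + b * y| ^ p ≤ (a * |x| + b * |y|) ^ p := by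
        refine Real.rpow_le_rpow (abs_nonneg _) ?_ (by linarith)
        simpa [abs_mul, abs_of_nonneg ha, abs_of_nonneg hb] using abs_add_le (a * x) (b * y)
    _ ≤ a * |x| ^ p + b * |y| ^ p :=
        (convexOn_rpow hp).2 (abs_nonneg x) (abs_nonneg y) ha hb hab

theorem ConvexOn.map_add_map_le_of_add_eq {s : Set ℝ} {f : ℝ → ℝ} (hf : ConvexOn ℝ s f)
    {x y z w : ℝ} (hx : x ∈ s) (hw : w ∈ s) (hxy : x ≤ y) (hyw : y ≤ w) (h : y + z = x + w) :
    f y + f z ≤ f x + f w := by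
  rcases (hxy.trans hyw).eq_or_lt with hxw | hxw
  · obtain rfl : y = x := by linarith
    obtain rfl : z = w := by linarith
    rfl
  set a := (w - y) / (w - x)
  set b := (y - x) / (w - x)
  have hwx : w - x ≠ 0 := by linarith
  have hab : a + b = 1 := by rw [← add_div, div_eq_one_iff_eq hwx]; ring
  have ha : 0 ≤ a := div_nonneg (by linarith) (by linarith)
  have hb : 0 ≤ b := div_nonneg (by linarith) (by linarith)
  have hy := hf.2 hx hw ha hb hab
  have hz := hf.2 hx hw hb ha (by rw [add_comm, hab])
  have hy' : a • x + b • w = y := by simp only [smul_eq_mul, a, b]; field_simp; ring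
  have hz' : b • x + a • w = z := by
    rw [show z = x + w - y by linarith]; simp only [smul_eq_mul, a, b]; field_simp; ring
  rw [hy'] at hy
  rw [hz'] at hz
  simp only [smul_eq_mul] at hy hz
  linear_combination hy + hz + (f x + f w) * hab

theorem abs_max_sub_max_rpow_add_le {p : ℝ} (hp : 1 ≤ p) (a b c d : ℝ) :
    |max a b - max c d| ^ p + |min a b - min c d| ^ p ≤ |a - c| ^ p + |b - d| ^ p := by
  have hφ := convexOn_abs_rpow hp
  rcases le_total a b with hab | hab <;> rcases le_total c d with hcd | hcd
  · simp [hab, hcd, add_comm]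
  · rw [max_eq_right hab, max_eq_left hcd, min_eq_left hab, min_eq_right hcd]
    exact hφ.map_add_map_le_of_add_eq trivial trivial (by linarith) (by linarith) (by ring)
  · rw [max_eq_left hab, max_eq_right hcd, min_eq_right hab, min_eq_left hcd,
      add_comm (|a - c| ^ p)]
    exact hφ.map_add_map_le_of_add_eq (x := b - d) (w := a - c) trivial trivial (by linarith)
      (by linarith) (by ring)
  · simp [hab, hcd]

theorem abs_min_one_le (a : ℝ) : |min a 1| ≤ |a| := by
  rcases le_total a 1 with h | h
  · rw [min_eq_left h]
  · rw [min_eq_right h, abs_one]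
    exact h.trans (le_abs_self a)

theorem abs_min_one_sub_min_one_le (a b : ℝ) : |min a 1 - min b 1| ≤ |a - b| := by
  simpa using abs_min_sub_min_le_max a 1 b 1

theorem lintegral_add_le_lintegral_add {α : Type*} [MeasurableSpace α] {μ : Measure α}
    {f₁ f₂ g₁ g₂ : α → ℝ≥0∞} (hg₁ : Measurable g₁) (h : ∀ x, f₁ x + f₂ x ≤ g₁ x + g₂ x) :
    ∫⁻ x, f₁ x ∂μ + ∫⁻ x, f₂ x ∂μ ≤ ∫⁻ x, g₁ x ∂μ + ∫⁻ x, g₂ x ∂μ :=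
  (le_lintegral_add _ _).trans ((lintegral_mono h).trans_eq (lintegral_add_left hg₁ _))

theorem continuous_ofReal_abs_rpow {p : ℝ} (hp : 0 ≤ p) :
    Continuous fun r : ℝ => ENNReal.ofReal (|r| ^ p) :=
  ENNReal.continuous_ofReal.comp ((Real.continuous_rpow_const hp).comp continuous_abs)

section Energies

variable {p : ℝ}

noncomputable def lpEnergy {α : Type*} [MeasurableSpace α] (p : ℝ) (μ : Measure α)
    (f : α → ℝ) : ℝ≥0∞ :=
  ∫⁻ x, ENNReal.ofReal (|f x| ^ p) ∂μ

theorem isCapacitaryEnergy_lpEnergy {α : Type*} [MeasurableSpace α] (hp : 0 ≤ p)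
    (μ : Measure α) : IsCapacitaryEnergy (lpEnergy p μ) where
  submodular f g hf hg := lintegral_add_le_lintegral_add (by fun_prop) fun x => by
    rcases le_total (f x) (g x) with h | h <;> simp [h, add_comm]
  truncate_le f _ := lintegral_mono fun x => ENNReal.ofReal_le_ofReal <|
    Real.rpow_le_rpow (abs_nonneg _) (abs_min_one_le (f x)) hp
  le_liminf F f hF hlim := lintegral_le_liminf_lintegral (fun n => by fun_prop) fun x =>
    (((continuous_ofReal_abs_rpow hp).tendsto _).comp (hlim x)).liminf_eq.ge

variable {A : Type*} [Add A] [MeasurableSpace A] [MeasurableAdd₂ A]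

noncomputable def nlEnergy (p : ℝ) (μ ν : Measure A) (f : A → ℝ) : ℝ≥0∞ :=
  ∫⁻ h, ∫⁻ x, ENNReal.ofReal (|f (x + h) - f x| ^ p) ∂μ ∂ν

theorem measurable_lintegral_ofReal_abs_sub_rpow (μ : Measure A) [SFinite μ] {f : A → ℝ}
    (hf : Measurable f) :
    Measurable fun h => ∫⁻ x, ENNReal.ofReal (|f (x + h) - f x| ^ p) ∂μ :=
  Measurable.lintegral_prod_right'
    (f := fun q : A × A => ENNReal.ofReal (|f (q.2 + q.1) - f q.2| ^ p)) (by fun_prop)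

theorem isCapacitaryEnergy_nlEnergy (hp : 1 ≤ p) (μ ν : Measure A) [SFinite μ] :
    IsCapacitaryEnergy (nlEnergy p μ ν) where
  submodular f g hf hg :=
    lintegral_add_le_lintegral_add (measurable_lintegral_ofReal_abs_sub_rpow μ hf) fun h =>
      lintegral_add_le_lintegral_add (by fun_prop) fun x => by
        rw [← ENNReal.ofReal_add (by positivity) (by positivity),
          ← ENNReal.ofReal_add (by positivity) (by positivity)]
        exact ENNReal.ofReal_le_ofReal (abs_max_sub_max_rpow_add_le hp _ _ _ _)
  truncate_le f _ := lintegral_mono fun h => lintegral_mono fun x => ENNReal.ofReal_le_ofReal <|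
    Real.rpow_le_rpow (abs_nonneg _) (abs_min_one_sub_min_one_le _ _) (by linarith)
  le_liminf F f hF hlim :=
    lintegral_le_liminf_lintegral (fun n => measurable_lintegral_ofReal_abs_sub_rpow μ (hF n))
      fun h => lintegral_le_liminf_lintegral (fun n => by fun_prop) fun x =>
        (((continuous_ofReal_abs_rpow (by linarith)).tendsto _).comp
          ((hlim (x + h)).sub (hlim x))).liminf_eq.ge

end Energies

section Variational

variable {p : ℝ}

theorem div_rpow_one_sub_mul_rpow {α s : ℝ} (hα : 0 < α) (hs : 0 < s) :
    (α / s) ^ (1 - p) * α ^ p = α * s ^ (p - 1) := by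
  rw [Real.div_rpow hα.le hs.le, div_mul_eq_mul_div, ← Real.rpow_add hα, sub_add_cancel,
    Real.rpow_one, div_eq_mul_inv, ← Real.rpow_neg hs.le, neg_sub]

theorem ENNReal.mul_div_rpow_eq (hp : 0 ≤ p) {w : ℝ≥0∞} (hw₀ : w ≠ 0) (hw : w ≠ ⊤) (x : ℝ≥0∞) :
    w * (x / w) ^ p = w ^ (1 - p) * x ^ p := by
  rw [ENNReal.div_rpow_of_nonneg _ _ hp, ENNReal.rpow_sub _ _ hw₀ hw, ENNReal.rpow_one,
    div_eq_mul_inv, div_eq_mul_inv]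
  ring

theorem rpow_add_rpow_rpow_le (hp : 1 ≤ p) {t : ℝ} (ht : t ∈ Ioo (0 : ℝ) 1) (a b : ℝ≥0∞) :
    (a ^ (1 / p) + b ^ (1 / p)) ^ p ≤
      ENNReal.ofReal (t ^ (1 - p)) * a + ENNReal.ofReal ((1 - t) ^ (1 - p)) * b := by
  have hp0 : 0 < p := by linarith
  have hw₁ : ENNReal.ofReal t ≠ 0 := by simpa using ht.1
  have hw₂ : ENNReal.ofReal (1 - t) ≠ 0 := by simpa using ht.2
  have hw : ENNReal.ofReal t + ENNReal.ofReal (1 - t) = 1 := by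
    rw [← ENNReal.ofReal_add ht.1.le (by linarith [ht.2]), add_sub_cancel, ENNReal.ofReal_one]
  have h := ENNReal.rpow_arith_mean_le_arith_mean2_rpow _ _
    (a ^ (1 / p) / ENNReal.ofReal t) (b ^ (1 / p) / ENNReal.ofReal (1 - t)) hw hp
  rwa [ENNReal.mul_div_cancel hw₁ ofReal_ne_top, ENNReal.mul_div_cancel hw₂ ofReal_ne_top,
    ENNReal.mul_div_rpow_eq hp0.le hw₁ ofReal_ne_top,
    ENNReal.mul_div_rpow_eq hp0.le hw₂ ofReal_ne_top,
    ENNReal.ofReal_rpow_of_pos ht.1, ENNReal.ofReal_rpow_of_pos (by linarith [ht.2]),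
    ← ENNReal.rpow_mul, ← ENNReal.rpow_mul, one_div_mul_cancel hp0.ne', ENNReal.rpow_one,
    ENNReal.rpow_one] at h

theorem iInf_le_rpow_add_rpow_rpow (hp : 1 ≤ p) (a b : ℝ≥0∞) :
    ⨅ t ∈ Ioo (0 : ℝ) 1, ENNReal.ofReal (t ^ (1 - p)) * a + ENNReal.ofReal ((1 - t) ^ (1 - p)) * b
      ≤ (a ^ (1 / p) + b ^ (1 / p)) ^ p := by
  have hp0 : 0 < p := by linarith
  rcases eq_or_ne a ⊤ with rfl | ha
  · simp [ENNReal.top_rpow_of_pos, hp0]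
  rcases eq_or_ne b ⊤ with rfl | hb
  · simp [ENNReal.top_rpow_of_pos, hp0]
  obtain ⟨a, ha0, rfl⟩ : ∃ a' : ℝ, 0 ≤ a' ∧ ENNReal.ofReal a' = a :=
    ⟨a.toReal, toReal_nonneg, ofReal_toReal ha⟩
  obtain ⟨b, hb0, rfl⟩ : ∃ b' : ℝ, 0 ≤ b' ∧ ENNReal.ofReal b' = b :=
    ⟨b.toReal, toReal_nonneg, ofReal_toReal hb⟩
  set s := a ^ (1 / p) + b ^ (1 / p)
  have hs : (ENNReal.ofReal a ^ (1 / p) + ENNReal.ofReal b ^ (1 / p)) ^ p =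
      ENNReal.ofReal (s ^ p) := by
    rw [ENNReal.ofReal_rpow_of_nonneg ha0 (by positivity),
      ENNReal.ofReal_rpow_of_nonneg hb0 (by positivity),
      ← ENNReal.ofReal_add (by positivity) (by positivity),
      ENNReal.ofReal_rpow_of_nonneg (by positivity) hp0.le]
  rw [hs]
  -- the infimum is attained at `t = a ^ (1 / p) / (a ^ (1 / p) + b ^ (1 / p))` only if `a, b > 0`,
  -- so shift both roots by `δ` and let `δ → 0`
  have hδ : ∀ δ > 0, ⨅ t ∈ Ioo (0 : ℝ) 1, ENNReal.ofReal (t ^ (1 - p)) * ENNReal.ofReal a +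
      ENNReal.ofReal ((1 - t) ^ (1 - p)) * ENNReal.ofReal b ≤ ENNReal.ofReal ((s + 2 * δ) ^ p) := by
    intro δ hδ
    set α := a ^ (1 / p) + δ
    set β := b ^ (1 / p) + δ
    have hα : 0 < α := by positivity
    have hβ : 0 < β := by positivity
    have hαβ : 0 < α + β := by positivity
    have hle {x : ℝ} (hx : 0 ≤ x) : x ≤ (x ^ (1 / p) + δ) ^ p := by
      calc x = (x ^ (1 / p)) ^ p := by
            rw [← Real.rpow_mul hx, one_div_mul_cancel hp0.ne', Real.rpow_one]
        _ ≤ _ := Real.rpow_le_rpow (by positivity) (by linarith) hp0.le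
    have ht : α / (α + β) ∈ Ioo (0 : ℝ) 1 := ⟨by positivity, (div_lt_one hαβ).2 (by linarith)⟩
    have h1t : 1 - α / (α + β) = β / (α + β) := by field_simp; ring
    refine (iInf₂_le _ ht).trans ?_
    rw [h1t, ← ENNReal.ofReal_mul (by positivity), ← ENNReal.ofReal_mul (by positivity),
      ← ENNReal.ofReal_add (by positivity) (by positivity)]
    refine ENNReal.ofReal_le_ofReal ?_
    calc (α / (α + β)) ^ (1 - p) * a + (β / (α + β)) ^ (1 - p) * b
        ≤ (α / (α + β)) ^ (1 - p) * α ^ p + (β / (α + β)) ^ (1 - p) * β ^ p := by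
          gcongr
          · exact hle ha0
          · exact hle hb0
      _ = (s + 2 * δ) ^ p := by
          rw [div_rpow_one_sub_mul_rpow hα hαβ, div_rpow_one_sub_mul_rpow hβ hαβ,
            Real.rpow_sub_one hαβ.ne', show s + 2 * δ = α + β by ring]
          field_simp
  have hcont : Continuous fun δ : ℝ => ENNReal.ofReal ((s + 2 * δ) ^ p) :=
    ENNReal.continuous_ofReal.comp ((Real.continuous_rpow_const hp0.le).comp (by fun_prop))
  have hlim : Tendsto (fun δ : ℝ => ENNReal.ofReal ((s + 2 * δ) ^ p)) (𝓝[>] 0)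
      (𝓝 (ENNReal.ofReal (s ^ p))) := by
    simpa using (hcont.tendsto 0).mono_left nhdsWithin_le_nhds
  exact ge_of_tendsto hlim (eventually_nhdsWithin_of_forall hδ)

theorem rpow_add_rpow_rpow_eq_iInf (hp : 1 ≤ p) (a b : ℝ≥0∞) :
    (a ^ (1 / p) + b ^ (1 / p)) ^ p = ⨅ t ∈ Ioo (0 : ℝ) 1,
      ENNReal.ofReal (t ^ (1 - p)) * a + ENNReal.ofReal ((1 - t) ^ (1 - p)) * b :=
  le_antisymm (le_iInf₂ fun _ ht => rpow_add_rpow_rpow_le hp ht a b)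
    (iInf_le_rpow_add_rpow_rpow hp a b)

end Variational

section NonlocalCapacity

variable {d : ℕ} {p : ℝ} {ν : Measure (EuclideanSpace ℝ (Fin d))}

theorem capNu_eq_setCap (hp : 0 < p) (E : Set (EuclideanSpace ℝ (Fin d))) :
    capNu d p ν E = setCap (fun f => nlNorm d p ν f ^ p) E := by
  refine le_antisymm (le_iInf₂ fun f ⟨hf, hE⟩ => ?_)
    (le_iInf₂ fun f ⟨⟨hf, _⟩, hE⟩ => setCap_le hf hE)
  rcases eq_or_ne (nlNorm d p ν f) ⊤ with h | h
  · simp [h, ENNReal.top_rpow_of_pos hp]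
  · exact iInf₂_le f ⟨⟨hf, h.lt_top⟩, hE⟩

theorem capNu_mono {E F : Set (EuclideanSpace ℝ (Fin d))} (hEF : E ⊆ F) :
    capNu d p ν E ≤ capNu d p ν F :=
  le_iInf₂ fun f hf => iInf₂_le (α := ℝ≥0∞) f ⟨hf.1, hEF.trans hf.2⟩

theorem nlNorm_rpow_le (hp : 1 ≤ p) {t : ℝ} (ht : t ∈ Ioo (0 : ℝ) 1)
    (f : EuclideanSpace ℝ (Fin d) → ℝ) :
    nlNorm d p ν f ^ p ≤ ENNReal.ofReal (t ^ (1 - p)) * lpEnergy p volume f +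
      ENNReal.ofReal ((1 - t) ^ (1 - p)) * nlEnergy p volume ν f :=
  rpow_add_rpow_rpow_le hp ht _ _

theorem capNu_iUnion_le_of_tendsto (hp : 1 ≤ p) {E : ℕ → Set (EuclideanSpace ℝ (Fin d))}
    (hE : Monotone E) {f : ℕ → EuclideanSpace ℝ (Fin d) → ℝ} (hfm : ∀ j, Measurable (f j))
    (hfE : ∀ j, E j ⊆ interior {x | 1 ≤ f j x}) {a b : ℝ≥0∞}
    (ha : Tendsto (fun j => lpEnergy p volume (f j)) atTop (𝓝 a))
    (hb : Tendsto (fun j => nlEnergy p volume ν (f j)) atTop (𝓝 b)) :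
    capNu d p ν (⋃ j, E j) ≤ (a ^ (1 / p) + b ^ (1 / p)) ^ p := by
  rw [capNu_eq_setCap (by linarith), rpow_add_rpow_rpow_eq_iInf hp]
  refine le_iInf₂ fun t ht => ?_
  set c₁ := ENNReal.ofReal (t ^ (1 - p))
  set c₂ := ENNReal.ofReal ((1 - t) ^ (1 - p))
  set G := fun f => c₁ * lpEnergy p volume f + c₂ * nlEnergy p volume ν f
  have hG : IsCapacitaryEnergy G :=
    ((isCapacitaryEnergy_lpEnergy (by linarith) volume).const_mul ofReal_ne_top).add
      ((isCapacitaryEnergy_nlEnergy hp volume ν).const_mul ofReal_ne_top)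
  have hlim : Tendsto (fun j => G (f j)) atTop (𝓝 (c₁ * a + c₂ * b)) :=
    (ENNReal.Tendsto.const_mul ha (Or.inr ofReal_ne_top)).add
      (ENNReal.Tendsto.const_mul hb (Or.inr ofReal_ne_top))
  calc setCap (fun f => nlNorm d p ν f ^ p) (⋃ j, E j)
      ≤ setCap G (⋃ j, E j) := iInf₂_mono fun f _ => nlNorm_rpow_le hp ht f
    _ = ⨆ j, setCap G (E j) := hG.setCap_iUnion hE
    _ ≤ c₁ * a + c₂ * b := iSup_le fun j => ge_of_tendsto hlim <|
        (eventually_ge_atTop j).mono fun k hk =>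
          (setCap_mono (hE hk)).trans (setCap_le (hfm k) (hfE k))

theorem capNu_iUnion_le (hp : 1 ≤ p) {E : ℕ → Set (EuclideanSpace ℝ (Fin d))}
    (hE : Monotone E) : capNu d p ν (⋃ j, E j) ≤ ⨆ j, capNu d p ν (E j) := by
  have hp0 : 0 < p := by linarith
  set A := lpEnergy p (volume : Measure (EuclideanSpace ℝ (Fin d)))
  set B := nlEnergy p volume ν
  refine ENNReal.le_of_forall_pos_le_add fun ε hε hL => ?_
  have hlt j : setCap (fun f => nlNorm d p ν f ^ p) (E j) < (⨆ j, capNu d p ν (E j)) + ε := by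
    rw [← capNu_eq_setCap hp0]
    exact (le_iSup (fun j => capNu d p ν (E j)) j).trans_lt
      (ENNReal.lt_add_right hL.ne (coe_ne_zero.2 hε.ne'))
  choose f hfm hfE hf using fun j => exists_lt_of_setCap_lt (hlt j)
  obtain ⟨⟨a, b⟩, -, σ, hσ, hlim⟩ :=
    isCompact_univ.tendsto_subseq (x := fun j => (A (f j), B (f j))) fun _ => mem_univ _
  have ha : Tendsto (fun k => A (f (σ k))) atTop (𝓝 a) := (continuous_fst.tendsto _).comp hlim
  have hb : Tendsto (fun k => B (f (σ k))) atTop (𝓝 b) := (continuous_snd.tendsto _).comp hlim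
  calc capNu d p ν (⋃ j, E j) = capNu d p ν (⋃ k, E (σ k)) := by
        rw [hE.iUnion_comp_tendsto_atTop hσ.tendsto_atTop]
    _ ≤ (a ^ (1 / p) + b ^ (1 / p)) ^ p :=
        capNu_iUnion_le_of_tendsto hp (hE.comp hσ.monotone) (fun k => hfm (σ k))
          (fun k => hfE (σ k)) ha hb
    _ ≤ (⨆ j, capNu d p ν (E j)) + ε :=
        le_of_tendsto' (((ha.ennrpow_const _).add (hb.ennrpow_const _)).ennrpow_const p)
          fun k => (hf (σ k)).le

end NonlocalCapacity

theorem statement_6_general (d : ℕ) (p : ℝ) (hp1 : 1 ≤ p)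
    (ν : Measure (EuclideanSpace ℝ (Fin d)))
    (E : ℕ → Set (EuclideanSpace ℝ (Fin d))) (hinc : Monotone E) :
    Tendsto (fun j => capNu d p ν (E j)) atTop (𝓝 (capNu d p ν (⋃ j, E j))) := by
  rw [le_antisymm (capNu_iUnion_le hp1 hinc) (iSup_le fun j => capNu_mono (subset_iUnion E j))]
  exact tendsto_atTop_iSup fun i j hij => capNu_mono (hinc hij)

/-- Lower semi-continuity of the nonlocal capacity on increasing sequences of
sets. -/
theorem statement_6 (d : ℕ) (hd : 1 ≤ d) (p : ℝ) (hp1 : 1 ≤ p)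
    (ν : Measure (EuclideanSpace ℝ (Fin d)))
    (hint : ∫⁻ x, ENNReal.ofReal (min 1 (‖x‖ ^ p)) ∂ν < ⊤)
    (E : ℕ → Set (EuclideanSpace ℝ (Fin d))) (hinc : Monotone E) :
    Tendsto (fun j => capNu d p ν (E j)) atTop (𝓝 (capNu d p ν (⋃ j, E j))) :=
  statement_6_general d p hp1 ν E hinc
end

section
/- Netrusov-type characterization of the nonlocal capacity: for every set E ⊆ ℝ^d, Cap_{ν,p}(E) = inf over open sets G ⊇ E of inf { ‖f‖_{W_p^ν}^p : f ∈ W_p^ν and f ≥ 1 Lebesgue-almost everywhere on G }. -/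
open MeasureTheory ENNReal Set Filter Topology

/-- Netrusov-type characterization: for any `E ⊆ ℝ^d`, the capacity equals the
infimum over open `G ⊇ E` of the infimum of `‖f‖_{W_p^ν}^p` over `f ∈ W_p^ν` with `f ≥ 1`
Lebesgue-a.e. on `G`. -/
theorem statement_10 (d : ℕ) (hd : 1 ≤ d) (p : ℝ) (hp1 : 1 ≤ p)
    (ν : Measure (EuclideanSpace ℝ (Fin d)))
    (hint : ∫⁻ x, ENNReal.ofReal (min 1 (‖x‖ ^ p)) ∂ν < ⊤)
    (E : Set (EuclideanSpace ℝ (Fin d))) :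
    capNu d p ν E =
      ⨅ (G : Set (EuclideanSpace ℝ (Fin d))) (_ : IsOpen G ∧ E ⊆ G)
        (f : EuclideanSpace ℝ (Fin d) → ℝ)
        (_ : memW d p ν f ∧ ∀ᵐ x ∂(volume.restrict G), 1 ≤ f x),
        nlNorm d p ν f ^ p := by
  classical
  apply le_antisymm
  · -- cap ≤ RHS: modify f on a null set
    refine le_iInf fun G => le_iInf fun hG => le_iInf fun f => le_iInf fun hf => ?_
    have hGmeas : MeasurableSet G := hG.1.measurableSet
    set N : Set (EuclideanSpace ℝ (Fin d)) := G ∩ {x | f x < 1} with hNdef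
    have hNmeas : MeasurableSet N :=
      hGmeas.inter (measurableSet_lt hf.1.1 measurable_const)
    have hN0 : volume N = 0 := by
      have h1 : ∀ᵐ x ∂(volume : Measure (EuclideanSpace ℝ (Fin d))), x ∈ G → 1 ≤ f x :=
        (ae_restrict_iff' hGmeas).1 hf.2
      have h2 := ae_iff.1 h1
      refine measure_mono_null ?_ h2
      intro x hx
      simp only [Set.mem_setOf_eq, not_forall]
      exact ⟨hx.1, not_le.2 hx.2⟩
    set g : EuclideanSpace ℝ (Fin d) → ℝ := fun x => if x ∈ N then 1 else f x with hgdef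
    have hgmeas : Measurable g := Measurable.ite hNmeas measurable_const hf.1.1
    have hgf : g =ᵐ[volume] f := by
      refine measure_mono_null ?_ hN0
      intro x hx
      by_contra hxN
      exact hx (by simp [hgdef, hxN])
    have htrans : ∀ h : EuclideanSpace ℝ (Fin d),
        (fun x => g (x + h)) =ᵐ[volume] (fun x => f (x + h)) := by
      intro h
      have hqmp := (measurePreserving_add_right
        (volume : Measure (EuclideanSpace ℝ (Fin d))) h).quasiMeasurePreserving
      have := hqmp.preimage_null (ae_iff.1 hgf)
      exact ae_iff.2 (measure_mono_null (fun x hx => hx) this)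
    have hsemi : nlSeminorm d p ν g = nlSeminorm d p ν f := by
      unfold nlSeminorm
      congr 1
      refine lintegral_congr fun h => ?_
      refine lintegral_congr_ae ?_
      filter_upwards [hgf, htrans h] with x hx1 hx2
      rw [show g (x + h) = f (x + h) from hx2, show g x = f x from hx1]
    have hnorm : nlNorm d p ν g = nlNorm d p ν f := by
      unfold nlNorm
      rw [hsemi]
      congr 2
      refine lintegral_congr_ae ?_
      filter_upwards [hgf] with x hx
      rw [hx]
    have hprop : memW d p ν g ∧ E ⊆ interior {x | 1 ≤ g x} := by
      constructor
      · exact ⟨hgmeas, hnorm ▸ hf.1.2⟩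
      · intro x hx
        refine interior_maximal ?_ hG.1 (hG.2 hx)
        intro y hy
        by_cases hyN : y ∈ N
        · simp [hgdef, hyN]
        · have hfy : ¬ f y < 1 := fun hlt => hyN ⟨hy, hlt⟩
          simpa [hgdef, hyN] using not_lt.1 hfy
    calc capNu d p ν E ≤ nlNorm d p ν g ^ p := by
          refine iInf_le_of_le g (iInf_le_of_le hprop le_rfl)
      _ = nlNorm d p ν f ^ p := by rw [hnorm]
  · -- RHS ≤ cap
    refine le_iInf fun f => le_iInf fun hf => ?_
    have hGopen : IsOpen (interior {x | 1 ≤ f x}) := isOpen_interior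
    refine iInf_le_of_le (interior {x | 1 ≤ f x}) ?_
    refine iInf_le_of_le ⟨hGopen, hf.2⟩ ?_
    refine iInf_le_of_le f (iInf_le_of_le ?_ le_rfl)
    refine ⟨hf.1, ?_⟩
    refine (ae_restrict_iff' hGopen.measurableSet).2 (ae_of_all _ fun x hx => ?_)
    exact (interior_subset hx : x ∈ {x | 1 ≤ f x})
end

section
/- Co-area formula for the nonlocal norm: let f ∈ W_1^ν with f ≥ 0, and for t > 0 set S_t(f) = {x ∈ ℝ^d : f(x) > t}. Then ‖f‖_{W_1^ν} = ∫₀^∞ ( 2 Per_ν(S_t(f)) + |S_t(f)| ) dt, where |·| denotes d-dimensional Lebesgue measure. -/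
open MeasureTheory ENNReal Set Filter Topology

/-- The `ν`-perimeter `Per_ν(E) = ∫_E ν(Eᶜ - x) dx`, where `Eᶜ - x = {y - x : y ∉ E}`. -/
noncomputable def perNu (d : ℕ) (ν : Measure (EuclideanSpace ℝ (Fin d)))
    (E : Set (EuclideanSpace ℝ (Fin d))) : ℝ≥0∞ :=
  ∫⁻ x in E, ν ((fun y => y - x) '' Eᶜ)

open scoped symmDiff

/-!
For `a, b ≥ 0`, `|a - b|` is the length of the set of levels `t > 0` separating `a` and `b`,
i.e. of `Iio a ∆ Iio b`. Integrating this identity in `x` and `h` and moving the level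
integral outside (Tonelli; `ν` is s-finite since `∫ min(1, |h|) dν < ∞`), level `t`
contributes `∫ |(E_t - h) ∆ E_t| dν(h)` with `E_t = {f > t}`. As `|E_t| < ∞` and Lebesgue
measure is translation invariant, `|(E_t - h) ∆ E_t| = 2 |E_t \ (E_t - h)|`, and one more
exchange of integrals turns `∫ |E_t \ (E_t - h)| dν(h)` into `Per_ν(E_t)`. The `L¹` part of
the norm is the layer-cake formula.
-/

theorem ofReal_abs_sub_eq_setLIntegral_indicator_symmDiff_Iio {a b : ℝ} (ha : 0 ≤ a)
    (hb : 0 ≤ b) :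
    ENNReal.ofReal |a - b| = ∫⁻ t in Ioi 0, (Iio a ∆ Iio b).indicator 1 t := by
  wlog hba : b ≤ a generalizing a b
  · rw [abs_sub_comm, symmDiff_comm]
    exact this hb ha (le_of_not_ge hba)
  have hdiff : Iio a \ Iio b = Ico b a := by ext; simp
  rw [Measure.restrict_congr_set Ioi_ae_eq_Ici,
    lintegral_indicator_one (measurableSet_Iio.symmDiff measurableSet_Iio),
    symmDiff_of_ge (Iio_subset_Iio hba), hdiff, Measure.restrict_apply measurableSet_Ico,
    inter_eq_left.2 (Ico_subset_Ici_self.trans (Ici_subset_Ici.2 hb)), Real.volume_Ico,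
    abs_of_nonneg (sub_nonneg.2 hba)]

theorem sFinite_of_lintegral_ne_top {α : Type*} [MeasurableSpace α] {ν : Measure α}
    {g : α → ℝ≥0∞} (hg : Measurable g) (hint : ∫⁻ x, g x ∂ν ≠ ∞)
    (h0 : SFinite (ν.restrict {x | g x = 0})) : SFinite ν := by
  have : IsFiniteMeasure (ν.withDensity g) := isFiniteMeasure_withDensity hint
  have hzero : MeasurableSet {x | g x = 0} := hg (measurableSet_singleton 0)
  have : SFinite (ν.restrict {x | g x = 0}ᶜ) := by
    refine sFinite_of_absolutelyContinuous (ν := ν.withDensity g) fun s hs => ?_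
    rw [Measure.restrict_apply' hzero.compl, inter_comm]
    exact (withDensity_apply_eq_zero' hg.aemeasurable).1 hs
  rw [← ν.restrict_add_restrict_compl hzero]
  infer_instance

theorem sFinite_of_lintegral_min_one_norm_ne_top {E : Type*} [NormedAddCommGroup E]
    [MeasurableSpace E] [OpensMeasurableSpace E] {ν : Measure E}
    (hint : ∫⁻ x, ENNReal.ofReal (min 1 ‖x‖) ∂ν ≠ ∞) : SFinite ν := by
  refine sFinite_of_lintegral_ne_top (by fun_prop) hint ?_
  have hzero : {x : E | ENNReal.ofReal (min 1 ‖x‖) = 0} = {0} := by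
    ext x; simp
  rw [hzero, Measure.restrict_singleton]
  infer_instance

theorem measure_setOf_lt_ne_top_of_lintegral_ofReal_ne_top {α : Type*} [MeasurableSpace α]
    {μ : Measure α} {f : α → ℝ} (hf : AEMeasurable f μ)
    (hint : ∫⁻ x, ENNReal.ofReal (f x) ∂μ ≠ ∞) {t : ℝ} (ht : 0 < t) : μ {x | t < f x} ≠ ∞ := by
  have ht' : ENNReal.ofReal t ≠ 0 := (ofReal_pos.2 ht).ne'
  have hmarkov := meas_ge_le_lintegral_div hf.ennreal_ofReal ht' ofReal_ne_top
  exact ne_top_of_le_ne_top (ENNReal.div_lt_top hint ht').ne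
    ((measure_mono fun x hx => ofReal_le_ofReal (le_of_lt hx)).trans hmarkov)

theorem lintegral_lintegral_lintegral_rotate {α β γ : Type*} [MeasurableSpace α]
    [MeasurableSpace β] [MeasurableSpace γ] {μα : Measure α} {μβ : Measure β} {μγ : Measure γ}
    [SFinite μα] [SFinite μβ] [SFinite μγ] {F : α → β → γ → ℝ≥0∞}
    (hF : Measurable fun p : α × β × γ => F p.1 p.2.1 p.2.2) :
    ∫⁻ a, ∫⁻ b, ∫⁻ c, F a b c ∂μγ ∂μβ ∂μα = ∫⁻ c, ∫⁻ a, ∫⁻ b, F a b c ∂μβ ∂μα ∂μγ := by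
  have hbc : ∀ a, ∫⁻ b, ∫⁻ c, F a b c ∂μγ ∂μβ = ∫⁻ c, ∫⁻ b, F a b c ∂μβ ∂μγ := fun a =>
    lintegral_lintegral_swap (hF.comp (measurable_const.prodMk measurable_id)).aemeasurable
  simp_rw [hbc]
  refine lintegral_lintegral_swap (Measurable.aemeasurable ?_)
  exact (hF.comp (measurable_fst.fst.prodMk
    (measurable_snd.prodMk measurable_fst.snd))).lintegral_prod_right'

section Translation

variable {G : Type*} [MeasurableSpace G] [AddCommGroup G] [MeasurableAdd₂ G] {μ ν : Measure G}
  {E : Set G}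

theorem measure_preimage_add_right_symmDiff [μ.IsAddRightInvariant] (hE : MeasurableSet E)
    (hμE : μ E ≠ ∞) (h : G) : μ (((· + h) ⁻¹' E) ∆ E) = 2 * μ (E \ (· + h) ⁻¹' E) := by
  have hEh : MeasurableSet ((· + h) ⁻¹' E) := measurable_add_const h hE
  rw [measure_symmDiff_eq hEh.nullMeasurableSet hE.nullMeasurableSet,
    measure_sdiff_symm hEh.nullMeasurableSet hE.nullMeasurableSet
      (measure_preimage_add_right μ h E)
      (ne_top_of_le_ne_top hμE (measure_mono inter_subset_right)),
    two_mul]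

theorem lintegral_measure_diff_preimage_add_right [SFinite μ] [SFinite ν]
    (hE : MeasurableSet E) :
    ∫⁻ h, μ (E \ (· + h) ⁻¹' E) ∂ν = ∫⁻ x in E, ν ((· - x) '' Eᶜ) ∂μ := by
  set S : Set (G × G) := {p | p.2 ∈ E ∧ p.2 + p.1 ∉ E}
  have hS : MeasurableSet S :=
    (measurable_snd hE).inter (measurable_snd.add measurable_fst hE.compl)
  have hslice : ∀ x,
      ν ((fun h => (h, x)) ⁻¹' S) = E.indicator (fun x => ν ((· - x) '' Eᶜ)) x := by
    intro x
    by_cases hx : x ∈ E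
    · rw [indicator_of_mem hx, image_sub_right]
      congr 1
      ext h
      simp [S, hx, add_comm]
    · simp [S, hx]
  rw [← lintegral_indicator hE, ← lintegral_congr hslice, ← Measure.prod_apply_symm hS]
  exact (Measure.prod_apply hS).symm

theorem lintegral_lintegral_ofReal_abs_sub_eq_lintegral_superlevel [SFinite μ] [SFinite ν]
    [μ.IsAddRightInvariant] {f : G → ℝ} (hf : Measurable f) (hf0 : ∀ x, 0 ≤ f x)
    (hfin : ∀ t > 0, μ {x | t < f x} ≠ ∞) :
    ∫⁻ h, ∫⁻ x, ENNReal.ofReal |f (x + h) - f x| ∂μ ∂ν =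
      ∫⁻ t in Ioi 0, 2 * ∫⁻ x in {x | t < f x}, ν ((· - x) '' {x | t < f x}ᶜ) ∂μ := by
  have hlevel : ∀ t, MeasurableSet {x | t < f x} := fun t => measurableSet_lt measurable_const hf
  have hmeas : Measurable fun p : G × G × ℝ =>
      (Iio (f (p.2.1 + p.1)) ∆ Iio (f p.2.1)).indicator (1 : ℝ → ℝ≥0∞) p.2.2 :=
    measurable_one.indicator <| MeasurableSet.symmDiff
      (measurableSet_lt measurable_snd.snd (hf.comp (measurable_snd.fst.add measurable_fst)))
      (measurableSet_lt measurable_snd.snd (hf.comp measurable_snd.fst))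
  calc ∫⁻ h, ∫⁻ x, ENNReal.ofReal |f (x + h) - f x| ∂μ ∂ν
      = ∫⁻ h, ∫⁻ x, (∫⁻ t in Ioi 0, (Iio (f (x + h)) ∆ Iio (f x)).indicator 1 t) ∂μ ∂ν := by
        simp_rw [ofReal_abs_sub_eq_setLIntegral_indicator_symmDiff_Iio (hf0 _) (hf0 _)]
    _ = ∫⁻ t in Ioi 0, ∫⁻ h, ∫⁻ x,
          (((· + h) ⁻¹' {x | t < f x}) ∆ {x | t < f x}).indicator 1 x ∂μ ∂ν :=
        lintegral_lintegral_lintegral_rotate hmeas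
    _ = ∫⁻ t in Ioi 0, ∫⁻ h, μ (((· + h) ⁻¹' {x | t < f x}) ∆ {x | t < f x}) ∂ν := by
        simp_rw [lintegral_indicator_one
          ((measurable_add_const _ (hlevel _)).symmDiff (hlevel _))]
    _ = _ := by
        refine setLIntegral_congr_fun measurableSet_Ioi fun t ht => ?_
        simp_rw [measure_preimage_add_right_symmDiff (hlevel t) (hfin t ht)]
        rw [lintegral_const_mul' _ _ ofNat_ne_top,
          lintegral_measure_diff_preimage_add_right (hlevel t)]

end Translation

theorem nlNorm_one_eq_of_nonneg {d : ℕ} {ν : Measure (EuclideanSpace ℝ (Fin d))}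
    {f : EuclideanSpace ℝ (Fin d) → ℝ} (hf0 : ∀ x, 0 ≤ f x) :
    nlNorm d 1 ν f = (∫⁻ x, ENNReal.ofReal (f x)) +
      ∫⁻ h, (∫⁻ x, ENNReal.ofReal |f (x + h) - f x|) ∂ν := by
  simp [nlNorm, nlSeminorm, abs_of_nonneg (hf0 _)]

theorem statement_12_general (d : ℕ)
    (ν : Measure (EuclideanSpace ℝ (Fin d)))
    (hint : ∫⁻ x, ENNReal.ofReal (min 1 ‖x‖) ∂ν < ⊤)
    (f : EuclideanSpace ℝ (Fin d) → ℝ)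
    (hf : memW d 1 ν f) (hfnn : ∀ x, 0 ≤ f x) :
    nlNorm d 1 ν f =
      ∫⁻ t in Ioi (0 : ℝ),
        (2 * perNu d ν {x | t < f x} + volume {x | t < f x}) := by
  obtain ⟨hfm, hnorm⟩ := hf
  have : SFinite ν := sFinite_of_lintegral_min_one_norm_ne_top hint.ne
  rw [nlNorm_one_eq_of_nonneg hfnn] at hnorm ⊢
  have hL1 : ∫⁻ x, ENNReal.ofReal (f x) ≠ ∞ := (ENNReal.add_lt_top.1 hnorm).1.ne
  have hlevel_antitone : Antitone fun t : ℝ => volume {x | t < f x} :=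
    fun s t hst => measure_mono fun x hx => lt_of_le_of_lt hst hx
  rw [lintegral_lintegral_ofReal_abs_sub_eq_lintegral_superlevel hfm hfnn
      fun t ht => measure_setOf_lt_ne_top_of_lintegral_ofReal_ne_top hfm.aemeasurable hL1 ht,
    lintegral_eq_lintegral_meas_lt volume (ae_of_all _ hfnn) hfm.aemeasurable, add_comm,
    ← lintegral_add_right _ hlevel_antitone.measurable]
  rfl

/-- Co-area formula: for `0 ≤ f ∈ W_1^ν` and `S_t(f) = {f > t}`,
`‖f‖_{W_1^ν} = ∫₀^∞ (2 Per_ν(S_t(f)) + |S_t(f)|) dt`. -/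
theorem statement_12 (d : ℕ) (hd : 1 ≤ d)
    (ν : Measure (EuclideanSpace ℝ (Fin d)))
    (hint : ∫⁻ x, ENNReal.ofReal (min 1 ‖x‖) ∂ν < ⊤)
    (f : EuclideanSpace ℝ (Fin d) → ℝ)
    (hf : memW d 1 ν f) (hfnn : ∀ x, 0 ≤ f x) :
    nlNorm d 1 ν f =
      ∫⁻ t in Ioi (0 : ℝ),
        (2 * perNu d ν {x | t < f x} + volume {x | t < f x}) :=
  statement_12_general d ν hint f hf hfnn
end
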